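/- The quantum integers satisfy [m]_q * [n]_q = ∑_{k=0}^{min(m,n)-1} [m + n - 1 - 2k]_q for all m, n ≥ 1. -/
import Mathlib


/-- The quantum integer `[m]_q = (q^m - q^{-m})/(q - q⁻¹)`. -/
noncomputable def qint {K : Type*} [Field K] (q : K) (m : ℤ) : K :=
  (q ^ m - q ^ (-m)) / (q - q⁻¹)

theorem qint_mul {K : Type*} [Field K] (q : K) (hq : q ≠ 0) (hq2 : q - q⁻¹ ≠ 0)
    (m n : ℕ) (hm : 1 ≤ m) (hn : 1 ≤ n) :
    qint q m * qint q n =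
      ∑ k ∈ Finset.range (min m n), qint q ((m : ℤ) + n - 1 - 2 * k) := by
  have key : ∀ b : ℤ, qint q b * (q - q⁻¹) = q ^ b - q ^ (-b) := fun b =>
    div_mul_cancel₀ _ hq2
  apply mul_right_cancel₀ (pow_ne_zero 2 hq2)
  set N := min m n with hN
  set f : ℕ → K := fun k => q ^ ((m : ℤ) + n - 2 * k) + q ^ (2 * (k : ℤ) - m - n) with hf
  have hterm : ∀ k : ℕ, qint q ((m : ℤ) + n - 1 - 2 * k) * (q - q⁻¹) ^ 2
      = f k - f (k + 1) := by
    intro k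
    have hb := key ((m : ℤ) + n - 1 - 2 * k)
    have : qint q ((m : ℤ) + n - 1 - 2 * k) * (q - q⁻¹) ^ 2
        = (q ^ ((m : ℤ) + n - 1 - 2 * k) - q ^ (-((m : ℤ) + n - 1 - 2 * k))) * (q - q⁻¹) := by
      rw [sq, ← mul_assoc, hb]
    rw [this, hf]
    have hinv : q⁻¹ = q ^ (-1 : ℤ) := by simp [zpow_neg]
    rw [hinv, sub_mul, mul_sub, mul_sub, ← zpow_add₀ hq, ← zpow_add₀ hq]
    have e1 : q ^ ((m:ℤ) + n - 1 - 2*k) * q = q ^ ((m:ℤ) + n - 2*k) := by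
      rw [← zpow_add_one₀ hq]; congr 1; ring
    have e2 : q ^ ((m:ℤ) + n - 1 - 2*k + -1) = q ^ ((m:ℤ) + n - 2*((k:ℤ)+1)) := by
      congr 1; ring
    have e3 : q ^ (-((m:ℤ) + n - 1 - 2*k)) * q = q ^ (2*((k:ℤ)+1) - m - n) := by
      rw [← zpow_add_one₀ hq]; congr 1; ring
    have e4 : q ^ (-((m:ℤ) + n - 1 - 2*k) + -1) = q ^ (2*(k:ℤ) - m - n) := by
      congr 1; ring
    rw [e1, e2, e3, e4]
    push_cast
    ring
  have hsum : (∑ k ∈ Finset.range N, qint q ((m : ℤ) + n - 1 - 2 * k)) * (q - q⁻¹) ^ 2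
      = f 0 - f N := by
    rw [Finset.sum_mul]
    rw [Finset.sum_congr rfl fun k _ => hterm k]
    exact Finset.sum_range_sub' f N
  rw [hsum]
  have hL : qint q m * qint q n * (q - q⁻¹) ^ 2
      = (q ^ (m : ℤ) - q ^ (-(m : ℤ))) * (q ^ (n : ℤ) - q ^ (-(n : ℤ))) := by
    rw [sq]
    calc qint q m * qint q n * ((q - q⁻¹) * (q - q⁻¹))
        = (qint q m * (q - q⁻¹)) * (qint q n * (q - q⁻¹)) := by ring
      _ = _ := by rw [key, key]
  rw [hL, hf]
  simp only
  rw [sub_mul, mul_sub, mul_sub, ← zpow_add₀ hq, ← zpow_add₀ hq, ← zpow_add₀ hq,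
    ← zpow_add₀ hq]
  rcases le_total m n with h | h
  · have hNm : N = m := by omega
    rw [hNm]
    rw [show (m:ℤ) + n - 2*(0:ℕ) = (m:ℤ) + n by push_cast; ring,
      show 2*((0:ℕ):ℤ) - m - n = -(m:ℤ) + -n by push_cast; ring,
      show (m:ℤ) + n - 2*(m:ℕ) = -(m:ℤ) + n by push_cast; ring,
      show 2*((m:ℕ):ℤ) - m - n = (m:ℤ) + -n by push_cast; ring]
    ring
  · have hNm : N = n := by omega
    rw [hNm]
    rw [show (m:ℤ) + n - 2*(0:ℕ) = (m:ℤ) + n by push_cast; ring,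
      show 2*((0:ℕ):ℤ) - m - n = -(m:ℤ) + -n by push_cast; ring,
      show (m:ℤ) + n - 2*(n:ℕ) = (m:ℤ) + -n by push_cast; ring,
      show 2*((n:ℕ):ℤ) - m - n = -(m:ℤ) + n by push_cast; ring]
    ring
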